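/- arXiv:1602.05799 — 3 statements merged into one kernel-verified Lean document; each statement's English description precedes it below -/
import Mathlib

section
/- Let G be a group and let L = ⊕_{g∈G} L_g be a G-graded Lie algebra over a field F. If the left-normed product [L_{g_1}, L_{g_2}, ..., L_{g_m}] is nonzero for some g_1, ..., g_m ∈ G (i.e., there exist x_i ∈ L_{g_i} with [x_1, x_2, ..., x_m] ≠ 0 in the left-normed convention), then the elements g_1, ..., g_m pairwise commute in G. -/
/-- A `G`-grading on a Lie algebra `L` over `F`: a vector space direct sum decomposition
`L = ⊕_{g ∈ G} 𝒜 g` such that `⁅𝒜 g, 𝒜 h⁆ ⊆ 𝒜 (g * h)` for all `g h : G`. -/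
def IsLieGrading {G F L : Type*} [Group G] [Field F] [LieRing L] [LieAlgebra F L]
    (𝒜 : G → Submodule F L) : Prop :=
  letI : DecidableEq G := Classical.decEq G
  DirectSum.IsInternal 𝒜 ∧
    ∀ g h : G, ∀ x ∈ 𝒜 g, ∀ y ∈ 𝒜 h, ⁅x, y⁆ ∈ 𝒜 (g * h)

/-- A subspace `V` of a `G`-graded Lie algebra is graded (homogeneous) if it is the
sum of its homogeneous components, i.e. `V = ⊕_{g ∈ G} (V ∩ L_g)`. -/
def IsGradedSubspace {G F L : Type*} [Group G] [Field F] [LieRing L] [LieAlgebra F L]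
    (𝒜 : G → Submodule F L) (V : Submodule F L) : Prop :=
  V = ⨆ g : G, 𝒜 g ⊓ V

/-- A `G`-graded Lie algebra is graded simple if `⁅L, L⁆ ≠ 0` and the only graded
ideals of `L` are `0` and `L`. -/
def IsGradedSimple {G F L : Type*} [Group G] [Field F] [LieRing L] [LieAlgebra F L]
    (𝒜 : G → Submodule F L) : Prop :=
  (∃ x y : L, ⁅x, y⁆ ≠ 0) ∧
    ∀ I : LieIdeal F L, IsGradedSubspace 𝒜 I.toSubmodule → I = ⊥ ∨ I = ⊤

/-- The left-normed Lie product `[a, b₁, b₂, …, bₙ] = [[…[[a, b₁], b₂]…], bₙ]`. -/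
def leftNormedBracket {L : Type*} [LieRing L] : L → List L → L
  | a, [] => a
  | a, b :: t => leftNormedBracket ⁅a, b⁆ t

/-!
If `x ∈ L_g`, `y ∈ L_h` and `⁅x, y⁆ ≠ 0`, then `⁅x, y⁆ = -⁅y, x⁆` lies in `L_{gh} ∩ L_{hg}`, so
`gh = hg`. In general write a nonzero product as `[b, u, y]` with `b = [x₁, …, xₖ]`; by induction
the degrees of `x₁, …, xₖ, u` pairwise commute, and by the Jacobi identity
`[b, u, y] = [b, y, u] + [b, [u, y]]` one of the two summands is nonzero. If `[b, [u, y]] ≠ 0`,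
then `deg u` commutes with `deg y`, and by induction each `deg xᵢ` commutes with `deg u · deg y`,
hence with `deg y`. If `[b, y, u] ≠ 0`, then `[b, y] ≠ 0` shows that each `deg xᵢ` commutes with
`deg y`, while `deg y` commutes with the total degree `deg x₁ ⋯ deg xₖ · deg u` of `[b, u]`, hence
with `deg u`.
-/

open Function

theorem List.pairwise_append_singleton_iff {α : Type*} {R : α → α → Prop} {l : List α} {a : α} :
    (l ++ [a]).Pairwise R ↔ l.Pairwise R ∧ ∀ x ∈ l, R x a := by
  simp [List.pairwise_append]

theorem leftNormedBracket_concat {L : Type*} [LieRing L] (a : L) (l : List L) (b : L) :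
    leftNormedBracket a (l ++ [b]) = ⁅leftNormedBracket a l, b⁆ := by
  induction l generalizing a with
  | nil => rfl
  | cons c l ih => exact ih ⁅a, c⁆

section Graded

variable {G R L : Type*} [Group G] [Ring R] [LieRing L] [Module R L] {𝒜 : G → Submodule R L}

theorem leftNormedBracket_mem (hmul : ∀ g h : G, ∀ x ∈ 𝒜 g, ∀ y ∈ 𝒜 h, ⁅x, y⁆ ∈ 𝒜 (g * h))
    {g₀ : G} {a : L} (ha : a ∈ 𝒜 g₀) {l : List (G × L)} (hl : ∀ p ∈ l, p.2 ∈ 𝒜 p.1) :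
    leftNormedBracket a (l.map Prod.snd) ∈ 𝒜 (g₀ :: l.map Prod.fst).prod := by
  induction l using List.reverseRecOn with
  | nil => simpa [leftNormedBracket] using ha
  | append_singleton l p ih =>
    have hlp := hmul _ _ _ (ih fun q hq => hl q (by simp [hq])) _ (hl p (by simp))
    simpa [leftNormedBracket_concat, mul_assoc] using hlp

theorem commute_of_lie_ne_zero (hmul : ∀ g h : G, ∀ x ∈ 𝒜 g, ∀ y ∈ 𝒜 h, ⁅x, y⁆ ∈ 𝒜 (g * h))
    (hdisj : Pairwise (Disjoint on 𝒜)) {g h : G} {x y : L} (hx : x ∈ 𝒜 g) (hy : y ∈ 𝒜 h)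
    (hxy : ⁅x, y⁆ ≠ 0) : Commute g h := by
  by_contra hgh
  have hyx : ⁅x, y⁆ ∈ 𝒜 (h * g) := by
    rw [← lie_skew]
    exact (𝒜 (h * g)).neg_mem (hmul _ _ _ hy _ hx)
  exact hxy (Submodule.disjoint_def.mp (hdisj hgh) _ (hmul _ _ _ hx _ hy) hyx)

theorem pairwise_commute_of_lie_leftNormedBracket_ne_zero
    (hmul : ∀ g h : G, ∀ x ∈ 𝒜 g, ∀ y ∈ 𝒜 h, ⁅x, y⁆ ∈ 𝒜 (g * h))
    (hdisj : Pairwise (Disjoint on 𝒜)) {g₀ : G} {a : L} (ha : a ∈ 𝒜 g₀)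
    {l : List (G × L)} (hl : ∀ p ∈ l, p.2 ∈ 𝒜 p.1) {h : G} {y : L} (hy : y ∈ 𝒜 h)
    (hne : ⁅leftNormedBracket a (l.map Prod.snd), y⁆ ≠ 0) :
    ((g₀ :: l.map Prod.fst) ++ [h]).Pairwise Commute := by
  induction l using List.reverseRecOn generalizing h y with
  | nil =>
    simpa using commute_of_lie_ne_zero hmul hdisj ha hy (by simpa [leftNormedBracket] using hne)
  | append_singleton l pu ih =>
    obtain ⟨p, u⟩ := pu
    have hl' : ∀ q ∈ l, q.2 ∈ 𝒜 q.1 := fun q hq => hl q (by simp [hq])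
    have hu : u ∈ 𝒜 p := hl (p, u) (by simp)
    set b := leftNormedBracket a (l.map Prod.snd)
    set D := g₀ :: l.map Prod.fst
    simp only [List.map_append, List.map_singleton, leftNormedBracket_concat] at hne
    rw [List.map_append, List.map_singleton, ← List.cons_append,
      List.pairwise_append_singleton_iff]
    have hbu : ⁅b, u⁆ ≠ 0 := fun h0 => hne (by rw [h0, zero_lie])
    have hDp : (D ++ [p]).Pairwise Commute := ih hl' hu hbu
    refine ⟨hDp, ?_⟩
    have hD_p := (List.pairwise_append_singleton_iff.mp hDp).2
    have hjacobi : ⁅⁅b, u⁆, y⁆ = ⁅⁅b, y⁆, u⁆ + ⁅b, ⁅u, y⁆⁆ := by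
      rw [leibniz_lie, ← lie_skew ⁅b, y⁆ u]
      abel
    simp only [List.mem_append, List.mem_singleton]
    by_cases hb_uy : ⁅b, ⁅u, y⁆⁆ = 0
    · have hby : ⁅b, y⁆ ≠ 0 := fun h0 => hne (by rw [hjacobi, hb_uy, h0, zero_lie, add_zero])
      have hD_h := (List.pairwise_append_singleton_iff.mp (ih hl' hy hby)).2
      have hbu_deg : Commute (D.prod * p) h :=
        commute_of_lie_ne_zero hmul hdisj (hmul _ _ _ (leftNormedBracket_mem hmul ha hl') _ hu)
          hy hne
      have hph : Commute p h := by
        simpa using (Commute.list_prod_left D h hD_h).inv_left.mul_left hbu_deg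
      rintro e (he | rfl)
      exacts [hD_h e he, hph]
    · have huy : ⁅u, y⁆ ≠ 0 := fun h0 => hb_uy (by rw [h0, lie_zero])
      have hph : Commute p h := commute_of_lie_ne_zero hmul hdisj hu hy huy
      have hD_ph := (List.pairwise_append_singleton_iff.mp (ih hl' (hmul _ _ _ hu _ hy) hb_uy)).2
      rintro e (he | rfl)
      · simpa using (hD_p e he).inv_right.mul_right (hD_ph e he)
      · exact hph

theorem pairwise_commute_of_leftNormedBracket_ne_zero
    (hmul : ∀ g h : G, ∀ x ∈ 𝒜 g, ∀ y ∈ 𝒜 h, ⁅x, y⁆ ∈ 𝒜 (g * h))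
    (hdisj : Pairwise (Disjoint on 𝒜)) {g₀ : G} {a : L} (ha : a ∈ 𝒜 g₀)
    {l : List (G × L)} (hl : ∀ p ∈ l, p.2 ∈ 𝒜 p.1)
    (hne : leftNormedBracket a (l.map Prod.snd) ≠ 0) :
    (g₀ :: l.map Prod.fst).Pairwise Commute := by
  cases l using List.reverseRecOn with
  | nil => exact List.pairwise_singleton _ _
  | append_singleton l q =>
    simp only [List.map_append, List.map_singleton, leftNormedBracket_concat] at hne ⊢
    exact pairwise_commute_of_lie_leftNormedBracket_ne_zero hmul hdisj ha
      (fun p hp => hl p (by simp [hp])) (hl q (by simp)) hne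

end Graded

/-- If the left-normed product `[L_{g₁}, …, L_{gₘ}]` is nonzero, i.e. there
are homogeneous `xᵢ ∈ L_{gᵢ}` with `[x₁, …, xₘ] ≠ 0`, then `g₁, …, gₘ` pairwise commute. -/
theorem leftNormed_ne_zero_pairwise_commute {G F L : Type*} [Group G] [Field F]
    [LieRing L] [LieAlgebra F L] (𝒜 : G → Submodule F L) (hgr : IsLieGrading 𝒜)
    (m : ℕ) (g : Fin (m + 1) → G) (x : Fin (m + 1) → L)
    (hx : ∀ i, x i ∈ 𝒜 (g i))
    (hne : leftNormedBracket (x 0) (List.ofFn fun i : Fin m => x i.succ) ≠ 0) :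
    ∀ i j, g i * g j = g j * g i := by
  obtain ⟨hint, hmul⟩ := hgr
  have hdisj : Pairwise (Disjoint on 𝒜) :=
    letI := Classical.decEq G
    hint.submodule_iSupIndep.pairwiseDisjoint
  have hcomm : (List.ofFn g).Pairwise Commute := by
    simpa [List.map_ofFn, Function.comp_def, ← List.ofFn_succ] using
      pairwise_commute_of_leftNormedBracket_ne_zero hmul hdisj (hx 0)
        (l := List.ofFn fun i : Fin m => (g i.succ, x i.succ))
        (by simpa [List.mem_ofFn] using fun i : Fin m => hx i.succ)
        (by simpa [List.map_ofFn, Function.comp_def] using hne)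
  intro i j
  rcases lt_trichotomy i j with hij | rfl | hji
  · exact List.pairwise_ofFn.mp hcomm hij
  · rfl
  · exact (List.pairwise_ofFn.mp hcomm hji).symm
end

section
/- Let G be a group and let L = ⊕_{g∈G} L_g be a G-graded Lie algebra over a field F. Suppose g, h ∈ Supp L satisfy gh ≠ hg. Then [Id(L_g), Id(L_h)] = 0, where Id(L_g) denotes the (two-sided Lie) ideal of L generated by the subspace L_g; that is, [u, v] = 0 for every u in the ideal generated by L_g and every v in the ideal generated by L_h. -/
/-!
Homogeneous elements of non-commuting degrees `a, b` bracket to zero, since `⁅x, y⁆` lies in both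
`L_{ab}` and `L_{ba}`. Hence every `L_k` with `k` not commuting with `h` centralizes `L_h`, and
this persists to `Id(L_h)`: for homogeneous `x ∈ L_t` and `c ∈ L_k`, the Jacobi identity gives
`⁅c, ⁅x, v⁆⁆ = ⁅⁅c, x⁆, v⁆ + ⁅x, ⁅c, v⁆⁆`, and if `kt` commutes with `h` then `t` does not, so
`⁅x, v⁆` already vanishes. Finally the centralizer of the ideal `Id(L_h)` is an ideal containing
`L_g`, so it contains `Id(L_g)`.
-/

namespace IsLieGrading

variable {G F L : Type*} [Group G] [Field F] [LieRing L] [LieAlgebra F L]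
  {𝒜 : G → Submodule F L}

theorem lie_eq_zero_of_not_commute (hgr : IsLieGrading 𝒜) {a b : G} (hab : ¬Commute a b)
    {x y : L} (hx : x ∈ 𝒜 a) (hy : y ∈ 𝒜 b) : ⁅x, y⁆ = 0 := by
  classical
  have hxy_ab : ⁅x, y⁆ ∈ 𝒜 (a * b) := hgr.2 a b x hx y hy
  have hxy_ba : ⁅x, y⁆ ∈ 𝒜 (b * a) := by
    simpa using (𝒜 (b * a)).neg_mem (hgr.2 b a y hy x hx)
  exact Submodule.disjoint_def.mp (hgr.1.submodule_iSupIndep.pairwiseDisjoint hab) _ hxy_ab hxy_ba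

theorem induction_on (hgr : IsLieGrading 𝒜) {motive : L → Prop}
    (mem : ∀ t, ∀ x ∈ 𝒜 t, motive x) (zero : motive 0)
    (add : ∀ x y, motive x → motive y → motive (x + y)) (x : L) : motive x := by
  classical
  have hx : x ∈ ⨆ t, 𝒜 t := hgr.1.submodule_iSup_eq_top ▸ Submodule.mem_top
  exact Submodule.iSup_induction 𝒜 (motive := motive) hx mem zero add

theorem lie_lie_eq_zero_of_forall_lie_eq_zero (hgr : IsLieGrading 𝒜) {h : G} {v : L}
    (hv : ∀ k, ¬Commute k h → ∀ c ∈ 𝒜 k, ⁅c, v⁆ = 0) (x : L) {k : G} (hk : ¬Commute k h)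
    {c : L} (hc : c ∈ 𝒜 k) : ⁅c, ⁅x, v⁆⁆ = 0 := by
  induction x using hgr.induction_on with
  | mem t x hx =>
    by_cases hkt : Commute (k * t) h
    · have ht : ¬Commute t h := fun ht ↦ hk (by simpa using hkt.mul_left ht.inv_left)
      rw [hv t ht x hx, lie_zero]
    · rw [leibniz_lie, hv k hk c hc, lie_zero, add_zero, hv (k * t) hkt _ (hgr.2 k t c hc x hx)]
  | zero => simp
  | add x y hx hy => rw [add_lie, lie_add, hx, hy, add_zero]

theorem lie_eq_zero_of_mem_lieSpan (hgr : IsLieGrading 𝒜) {h k : G} (hk : ¬Commute k h)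
    {c v : L} (hc : c ∈ 𝒜 k) (hv : v ∈ LieSubmodule.lieSpan F L (𝒜 h : Set L)) :
    ⁅c, v⁆ = 0 := by
  induction hv using LieSubmodule.lieSpan_induction generalizing k c with
  | mem v hv => exact hgr.lie_eq_zero_of_not_commute hk hc hv
  | zero => simp
  | add x y _ _ hx hy => rw [lie_add, hx hk hc, hy hk hc, add_zero]
  | smul a x _ hx => rw [lie_smul, hx hk hc, smul_zero]
  | lie x y _ hy =>
    exact hgr.lie_lie_eq_zero_of_forall_lie_eq_zero (fun k hk c hc ↦ hy hk hc) x hk hc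

theorem lieSpan_le_ker_lieSpan (hgr : IsLieGrading 𝒜) {g h : G} (hgh : ¬Commute g h) :
    LieSubmodule.lieSpan F L (𝒜 g : Set L) ≤
      LieModule.ker F L (LieSubmodule.lieSpan F L (𝒜 h : Set L)) := by
  rw [LieSubmodule.lieSpan_le]
  intro u hu
  rw [SetLike.mem_coe, LieModule.mem_ker]
  rintro ⟨v, hv⟩
  exact Subtype.ext (hgr.lie_eq_zero_of_mem_lieSpan hgh hu hv)

end IsLieGrading

theorem ideals_commute_of_not_commute_general {G F L : Type*} [Group G] [Field F]
    [LieRing L] [LieAlgebra F L] (𝒜 : G → Submodule F L) (hgr : IsLieGrading 𝒜)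
    {g h : G} (hnc : g * h ≠ h * g) :
    ∀ u ∈ LieSubmodule.lieSpan F L (𝒜 g : Set L),
      ∀ v ∈ LieSubmodule.lieSpan F L (𝒜 h : Set L), ⁅u, v⁆ = 0 := by
  intro u hu v hv
  have hu_ker := (LieModule.mem_ker F L _ u).mp (hgr.lieSpan_le_ker_lieSpan hnc hu)
  exact congrArg Subtype.val (hu_ker ⟨v, hv⟩)

/-- If `g, h ∈ Supp L` do not commute, then the ideals of `L` generated by
`L_g` and by `L_h` commute elementwise: `[Id(L_g), Id(L_h)] = 0`. -/
theorem ideals_commute_of_not_commute {G F L : Type*} [Group G] [Field F]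
    [LieRing L] [LieAlgebra F L] (𝒜 : G → Submodule F L) (hgr : IsLieGrading 𝒜)
    {g h : G} (hg : 𝒜 g ≠ ⊥) (hh : 𝒜 h ≠ ⊥) (hnc : g * h ≠ h * g) :
    ∀ u ∈ LieSubmodule.lieSpan F L (𝒜 g : Set L),
      ∀ v ∈ LieSubmodule.lieSpan F L (𝒜 h : Set L), ⁅u, v⁆ = 0 :=
  ideals_commute_of_not_commute_general 𝒜 hgr hnc
end

section
/- Let G be a group and let L = ⊕_{g∈G} L_g be a G-graded simple Lie algebra over a field F. Then the subgroup of G generated by Supp L is abelian; equivalently, any two elements of Supp L commute in G. -/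
/-!
Let `g, h ∈ Supp L` with `gh ≠ hg`. Homogeneous elements of non-commuting degrees `a, b`
commute, since their bracket lies in both `L_{ab}` and `L_{ba}`. So the Lie subalgebra `K`
generated by the components `L_k` with `gk ≠ kg` centralizes `L_g`. Bracketing with a
homogeneous element of degree `m` keeps `K` inside itself: if `m` commutes with `g` then `mk`
does not, and otherwise `L_m ⊆ K`. Hence the homogeneous part of `K` is a graded ideal; it
contains `L_h ≠ 0`, so it is all of `L`, and `L_g` is central. Then `L_g` is itself a graded
ideal, and as `L` is not abelian, `L_g = 0`, a contradiction.
-/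

namespace LieSubalgebra

variable {R L : Type*} [CommRing R] [LieRing L] [LieAlgebra R L]

variable (R) in
def centralizer (s : Set L) : LieSubalgebra R L where
  carrier := {x | ∀ u ∈ s, ⁅u, x⁆ = 0}
  add_mem' hx hy u hu := by rw [lie_add, hx u hu, hy u hu, add_zero]
  zero_mem' u _ := lie_zero u
  smul_mem' c _ hx u hu := by rw [lie_smul, hx u hu, smul_zero]
  lie_mem' hx hy u hu := by rw [leibniz_lie, hx u hu, hy u hu, lie_zero, zero_lie, add_zero]

end LieSubalgebra

section Grading

variable {G F L : Type*} [Group G] [Field F] [LieRing L] [LieAlgebra F L]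
  {𝒜 : G → Submodule F L}

theorem isGradedSubspace_iSup_inf (V : Submodule F L) :
    IsGradedSubspace 𝒜 (⨆ g, 𝒜 g ⊓ V) :=
  le_antisymm (iSup_le fun g => (le_inf inf_le_left (le_iSup (fun k => 𝒜 k ⊓ V) g)).trans
    (le_iSup (fun k => 𝒜 k ⊓ ⨆ g, 𝒜 g ⊓ V) g)) (iSup_le fun _ => inf_le_right)

theorem isGradedSubspace_component (g : G) : IsGradedSubspace 𝒜 (𝒜 g) :=
  le_antisymm ((le_inf le_rfl le_rfl).trans (le_iSup (fun k => 𝒜 k ⊓ 𝒜 g) g))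
    (iSup_le fun _ => inf_le_right)

def nonCommutingPart (𝒜 : G → Submodule F L) (g : G) : Submodule F L :=
  ⨆ (k) (_ : ¬Commute g k), 𝒜 k

theorem le_nonCommutingPart {g k : G} (hgk : ¬Commute g k) : 𝒜 k ≤ nonCommutingPart 𝒜 g :=
  le_iSup₂ (f := fun k (_ : ¬Commute g k) => 𝒜 k) k hgk

namespace IsLieGrading

theorem lie_mem (hgr : IsLieGrading 𝒜) {a b : G} {x y : L} (hx : x ∈ 𝒜 a) (hy : y ∈ 𝒜 b) :
    ⁅x, y⁆ ∈ 𝒜 (a * b) :=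
  hgr.2 a b x hx y hy

theorem iSupIndep (hgr : IsLieGrading 𝒜) : iSupIndep 𝒜 := by
  classical exact hgr.1.submodule_iSupIndep

theorem iSup_eq_top (hgr : IsLieGrading 𝒜) : ⨆ g, 𝒜 g = ⊤ := by
  classical exact hgr.1.submodule_iSup_eq_top

theorem eq_zero_of_mem_of_mem (hgr : IsLieGrading 𝒜) {a b : G} (hab : a ≠ b) {x : L}
    (ha : x ∈ 𝒜 a) (hb : x ∈ 𝒜 b) : x = 0 :=
  Submodule.disjoint_def.mp (hgr.iSupIndep.pairwiseDisjoint hab) x ha hb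

theorem lie_mem_of_forall_homogeneous (hgr : IsLieGrading 𝒜) {V : Submodule F L}
    (hV : ∀ m, ∀ x ∈ 𝒜 m, ∀ y ∈ V, ⁅x, y⁆ ∈ V) (x : L) {y : L} (hy : y ∈ V) : ⁅x, y⁆ ∈ V := by
  have hx : x ∈ ⨆ m, 𝒜 m := hgr.iSup_eq_top ▸ Submodule.mem_top
  induction hx using Submodule.iSup_induction' with
  | mem m x hx => exact hV m x hx y hy
  | zero => simp
  | add x x' _ _ hx hx' => simpa only [add_lie] using add_mem hx hx'

theorem lie_mem_iSup_inf (hgr : IsLieGrading 𝒜) {V : Submodule F L}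
    (hV : ∀ m, ∀ x ∈ 𝒜 m, ∀ y ∈ V, ⁅x, y⁆ ∈ V) {m : G} {x : L} (hx : x ∈ 𝒜 m) {y : L}
    (hy : y ∈ ⨆ g, 𝒜 g ⊓ V) : ⁅x, y⁆ ∈ ⨆ g, 𝒜 g ⊓ V := by
  induction hy using Submodule.iSup_induction' with
  | mem k y hy =>
    exact le_iSup (fun g => 𝒜 g ⊓ V) (m * k) ⟨hgr.lie_mem hx hy.1, hV m x hx y hy.2⟩
  | zero => simp
  | add y y' _ _ hy hy' => simpa only [lie_add] using add_mem hy hy'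

def gradedIdeal (hgr : IsLieGrading 𝒜) (V : Submodule F L)
    (hV : ∀ m, ∀ x ∈ 𝒜 m, ∀ y ∈ V, ⁅x, y⁆ ∈ V) : LieIdeal F L where
  toSubmodule := ⨆ g, 𝒜 g ⊓ V
  lie_mem {x _} hy :=
    hgr.lie_mem_of_forall_homogeneous (fun _ _ hx _ hy => hgr.lie_mem_iSup_inf hV hx hy) x hy

section GradedIdeal

variable (hgr : IsLieGrading 𝒜) {V : Submodule F L}
  (hV : ∀ m, ∀ x ∈ 𝒜 m, ∀ y ∈ V, ⁅x, y⁆ ∈ V)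

theorem isGradedSubspace_gradedIdeal :
    IsGradedSubspace 𝒜 (hgr.gradedIdeal V hV).toSubmodule :=
  isGradedSubspace_iSup_inf V

theorem gradedIdeal_le : (hgr.gradedIdeal V hV).toSubmodule ≤ V :=
  iSup_le fun _ => inf_le_right

theorem le_gradedIdeal {g : G} (hg : 𝒜 g ≤ V) : 𝒜 g ≤ (hgr.gradedIdeal V hV).toSubmodule :=
  (le_inf le_rfl hg).trans (le_iSup (fun k => 𝒜 k ⊓ V) g)

end GradedIdeal

theorem lieSpan_nonCommutingPart_le_centralizer (hgr : IsLieGrading 𝒜) (g : G) :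
    LieSubalgebra.lieSpan F L (nonCommutingPart 𝒜 g : Set L) ≤
      LieSubalgebra.centralizer F (𝒜 g : Set L) :=
  have hN : nonCommutingPart 𝒜 g ≤ (LieSubalgebra.centralizer F (𝒜 g : Set L)).toSubmodule :=
    iSup₂_le fun _ hgk _ hy _ hu => hgr.lie_eq_zero_of_not_commute hgk hu hy
  LieSubalgebra.lieSpan_le.mpr fun _ hy => hN hy

theorem lie_mem_lieSpan_nonCommutingPart (hgr : IsLieGrading 𝒜) (g : G) :
    ∀ m, ∀ x ∈ 𝒜 m, ∀ y ∈ LieSubalgebra.lieSpan F L (nonCommutingPart 𝒜 g : Set L),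
      ⁅x, y⁆ ∈ LieSubalgebra.lieSpan F L (nonCommutingPart 𝒜 g : Set L) := by
  set K := LieSubalgebra.lieSpan F L (nonCommutingPart 𝒜 g : Set L)
  have hN : nonCommutingPart 𝒜 g ≤ K.toSubmodule := fun _ hy => LieSubalgebra.subset_lieSpan hy
  intro m x hx y hy
  induction hy using LieSubalgebra.lieSpan_induction with
  | mem y hy =>
    have hN_comap : nonCommutingPart 𝒜 g ≤ K.toSubmodule.comap (LieAlgebra.ad F L x) := by
      refine iSup₂_le fun k hgk y hy => ?_
      by_cases hgm : Commute g m
      · have hgmk : ¬Commute g (m * k) := fun h => hgk (by simpa using hgm.inv_right.mul_right h)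
        exact hN (le_nonCommutingPart hgmk (hgr.lie_mem hx hy))
      · exact K.lie_mem (hN (le_nonCommutingPart hgm hx)) (hN (le_nonCommutingPart hgk hy))
    exact hN_comap hy
  | zero => simp
  | add y z _ _ hy hz => simpa only [lie_add] using add_mem hy hz
  | smul c y _ hy => simpa only [lie_smul] using K.smul_mem c hy
  | lie y z hyK hzK hy hz =>
    rw [leibniz_lie]
    exact add_mem (K.lie_mem hy hzK) (K.lie_mem hyK hz)

end IsLieGrading

namespace IsGradedSimple

theorem eq_top_of_component_le (hs : IsGradedSimple 𝒜) {I : LieIdeal F L}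
    (hI : IsGradedSubspace 𝒜 I.toSubmodule) {g : G} (hg : 𝒜 g ≠ ⊥) (hle : 𝒜 g ≤ I.toSubmodule) :
    I = ⊤ :=
  (hs.2 I hI).resolve_left fun hbot => hg (eq_bot_iff.mpr (by simpa [hbot] using hle))

theorem component_eq_bot_of_central (hs : IsGradedSimple 𝒜) {g : G}
    (hc : ∀ u ∈ 𝒜 g, ∀ y : L, ⁅u, y⁆ = 0) : 𝒜 g = ⊥ := by
  by_contra hg
  let I : LieIdeal F L :=
    { toSubmodule := 𝒜 g
      lie_mem := fun {x u} hu => by rw [← lie_skew, hc u hu x, neg_zero]; exact (𝒜 g).zero_mem }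
  have hI : I = ⊤ := hs.eq_top_of_component_le (isGradedSubspace_component g) hg le_rfl
  obtain ⟨x, y, hxy⟩ := hs.1
  exact hxy (hc x (hI ▸ LieSubmodule.mem_top x : x ∈ I) y)

theorem central_of_not_commute (hs : IsGradedSimple 𝒜) (hgr : IsLieGrading 𝒜) {g h : G}
    (hgh : ¬Commute g h) (hh : 𝒜 h ≠ ⊥) : ∀ u ∈ 𝒜 g, ∀ y : L, ⁅u, y⁆ = 0 := by
  set K := LieSubalgebra.lieSpan F L (nonCommutingPart 𝒜 g : Set L)
  have hK := hgr.lie_mem_lieSpan_nonCommutingPart g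
  have hJ : hgr.gradedIdeal K.toSubmodule hK = ⊤ :=
    hs.eq_top_of_component_le (hgr.isGradedSubspace_gradedIdeal hK) hh
      (hgr.le_gradedIdeal hK fun _ hy => LieSubalgebra.subset_lieSpan (le_nonCommutingPart hgh hy))
  intro u hu y
  have hyK : y ∈ K := hgr.gradedIdeal_le hK (hJ ▸ LieSubmodule.mem_top y)
  exact hgr.lieSpan_nonCommutingPart_le_centralizer g hyK u hu

end IsGradedSimple

end Grading

/-- If `L` is a `G`-graded simple Lie algebra, then any two elements of
`Supp L` commute; equivalently the subgroup of `G` generated by `Supp L` is abelian. -/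
theorem gradedSimple_support_commutative {G F L : Type*} [Group G] [Field F]
    [LieRing L] [LieAlgebra F L] (𝒜 : G → Submodule F L) (hgr : IsLieGrading 𝒜)
    (hs : IsGradedSimple 𝒜) :
    (∀ g h : G, 𝒜 g ≠ ⊥ → 𝒜 h ≠ ⊥ → g * h = h * g) ∧
      ∀ x ∈ Subgroup.closure {g : G | 𝒜 g ≠ ⊥},
        ∀ y ∈ Subgroup.closure {g : G | 𝒜 g ≠ ⊥}, x * y = y * x := by
  have hcomm : ∀ g h : G, 𝒜 g ≠ ⊥ → 𝒜 h ≠ ⊥ → g * h = h * g := fun g h hg hh =>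
    by_contra fun hgh => hg (hs.component_eq_bot_of_central (hs.central_of_not_commute hgr hgh hh))
  refine ⟨hcomm, fun x hx y hy => ?_⟩
  have hle := Subgroup.closure_le_centralizer_centralizer {g : G | 𝒜 g ≠ ⊥}
  exact Set.centralizer_centralizer_comm_of_comm (fun g hg h hh => hcomm g h hg hh)
    x (hle hx) y (hle hy)
end
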